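/- Let f : ℝ^d → ℝ be a proper, nonnegative C² function, and let α > 0, β > 0 and a ∈ ℝ be constants such that Δf − α|∇f|² + βf ≤ a and Δf ≤ a hold everywhere on ℝ^d. Then the integral ∫_{ℝ^d} e^{−αf} dx is finite. -/

import Mathlib

/-!
Fix an antitone cutoff `χ` vanishing on `[R, ∞)` and put `Φ(s) = χ(s) e^{-αs}`, so that
`αΦ + Φ' = χ' e^{-αs} ≤ 0`. Green's identity `∫ Φ(f) Δf = -∫ Φ'(f) |∇f|²` and the
hypothesis `Δf - α|∇f|² ≤ a - βf` then give `∫ χ(f) e^{-αf} (βf - a) ≤ 0`. As `βf - a ≥ 1`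
outside the compact sublevel set `{f ≤ (a + 1)/β}`, this bounds `∫ χ(f) e^{-αf}` independently
of the cutoff, and monotone convergence along cutoffs `χ ↑ 1` bounds `∫ e^{-αf}`.
-/

open MeasureTheory Real Gradient

/-- The Laplacian of a function on Euclidean space, as the trace of the second derivative. -/
noncomputable def lap {d : ℕ} (f : EuclideanSpace ℝ (Fin d) → ℝ)
    (x : EuclideanSpace ℝ (Fin d)) : ℝ :=
  ∑ i : Fin d,
    iteratedFDeriv ℝ 2 f x ![EuclideanSpace.single i 1, EuclideanSpace.single i 1]

section Euclidean

variable {d : ℕ}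

theorem gradient_apply (f : EuclideanSpace ℝ (Fin d) → ℝ) (x : EuclideanSpace ℝ (Fin d))
    (i : Fin d) : ∇ f x i = fderiv ℝ f x (EuclideanSpace.single i 1) := by
  simp [← inner_gradient_left, EuclideanSpace.inner_single_right]

theorem norm_gradient_sq (f : EuclideanSpace ℝ (Fin d) → ℝ) (x : EuclideanSpace ℝ (Fin d)) :
    ‖∇ f x‖ ^ 2 = ∑ i, fderiv ℝ f x (EuclideanSpace.single i 1) ^ 2 := by
  simp [EuclideanSpace.norm_sq_eq, gradient_apply]

theorem norm_gradient (f : EuclideanSpace ℝ (Fin d) → ℝ) (x : EuclideanSpace ℝ (Fin d)) :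
    ‖∇ f x‖ = ‖fderiv ℝ f x‖ := by
  rw [← toDual_gradient, LinearIsometryEquiv.norm_map]

theorem lap_eq_sum_fderiv_fderiv_apply {f : EuclideanSpace ℝ (Fin d) → ℝ}
    (hf : ContDiff ℝ 2 f) (x : EuclideanSpace ℝ (Fin d)) :
    lap f x = ∑ i, fderiv ℝ (fun y ↦ fderiv ℝ f y (EuclideanSpace.single i 1)) x
      (EuclideanSpace.single i 1) := by
  have hf' : DifferentiableAt ℝ (fderiv ℝ f) x :=
    (hf.fderiv_right (by norm_num)).differentiable one_ne_zero x
  simp [lap, iteratedFDeriv_two_apply, fderiv_clm_apply hf' (differentiableAt_const _)]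

theorem continuous_lap {f : EuclideanSpace ℝ (Fin d) → ℝ} (hf : ContDiff ℝ 2 f) :
    Continuous (lap f) :=
  continuous_finsetSum _ fun _ _ ↦ (hf.continuous_iteratedFDeriv le_rfl).eval_const _

theorem integral_mul_lap {ψ f : EuclideanSpace ℝ (Fin d) → ℝ} (hψ : ContDiff ℝ 1 ψ)
    (hψc : HasCompactSupport ψ) (hf : ContDiff ℝ 2 f) :
    ∫ x, ψ x * lap f x =
      -∫ x, ∑ i, fderiv ℝ ψ x (EuclideanSpace.single i 1) *
        fderiv ℝ f x (EuclideanSpace.single i 1) := by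
  have hf₁ (i : Fin d) : ContDiff ℝ 1 (fun y ↦ fderiv ℝ f y (EuclideanSpace.single i 1)) :=
    (hf.fderiv_right (by norm_num)).clm_apply contDiff_const
  have hint : ∀ {g : EuclideanSpace ℝ (Fin d) → ℝ}, Continuous g → HasCompactSupport g →
      Integrable g := fun hg hgc ↦ hg.integrable_of_hasCompactSupport hgc
  have hψ' (i : Fin d) := (hψ.continuous_fderiv one_ne_zero).clm_apply
    (continuous_const (y := EuclideanSpace.single i (1 : ℝ)))
  have hψ'c (i : Fin d) := hψc.fderiv_apply (𝕜 := ℝ) (EuclideanSpace.single i 1)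
  have hf₂ (i : Fin d) := ((hf₁ i).continuous_fderiv one_ne_zero).clm_apply
    (continuous_const (y := EuclideanSpace.single i (1 : ℝ)))
  simp_rw [lap_eq_sum_fderiv_fderiv_apply hf, Finset.mul_sum]
  have hint_lap (i : Fin d) : Integrable fun x ↦ ψ x *
      fderiv ℝ (fun y ↦ fderiv ℝ f y (EuclideanSpace.single i 1)) x (EuclideanSpace.single i 1) :=
    hint (hψ.continuous.mul (hf₂ i)) hψc.mul_right
  have hint_grad (i : Fin d) : Integrable fun x ↦ fderiv ℝ ψ x (EuclideanSpace.single i 1) *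
      fderiv ℝ f x (EuclideanSpace.single i 1) :=
    hint ((hψ' i).mul (hf₁ i).continuous) (hψ'c i).mul_right
  rw [integral_finsetSum _ fun i _ ↦ hint_lap i, integral_finsetSum _ fun i _ ↦ hint_grad i,
    ← Finset.sum_neg_distrib]
  exact Finset.sum_congr rfl fun i _ ↦ integral_mul_fderiv_eq_neg_fderiv_mul_of_integrable
    (hint_grad i) (hint_lap i) (hint (hψ.continuous.mul (hf₁ i).continuous) hψc.mul_right)
    (fun x _ ↦ hψ.differentiable one_ne_zero x)
    (fun x _ ↦ (hf₁ i).differentiable one_ne_zero x)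

theorem integral_comp_mul_lap {Φ : ℝ → ℝ} {f : EuclideanSpace ℝ (Fin d) → ℝ}
    (hΦ : ContDiff ℝ 1 Φ) (hf : ContDiff ℝ 2 f)
    (hc : HasCompactSupport (fun x ↦ Φ (f x))) :
    ∫ x, Φ (f x) * lap f x = -∫ x, deriv Φ (f x) * ‖∇ f x‖ ^ 2 := by
  have hf₁ : ContDiff ℝ 1 f := hf.of_le (by norm_num)
  rw [integral_mul_lap (ψ := fun x ↦ Φ (f x)) (hΦ.comp hf₁) hc hf]
  congr 2 with x
  have hcomp := ((hΦ.differentiable one_ne_zero _).hasDerivAt.comp_hasFDerivAt x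
    (hf₁.differentiable one_ne_zero x).hasFDerivAt).fderiv
  simp only [Function.comp_def] at hcomp
  simp [hcomp, norm_gradient_sq, Finset.mul_sum, mul_assoc, ← sq]

theorem integral_comp_mul_exp_mul_sub_nonpos {f : EuclideanSpace ℝ (Fin d) → ℝ}
    (hf : ContDiff ℝ 2 f) {α β a R : ℝ}
    (h1 : ∀ x, lap f x - α * ‖∇ f x‖ ^ 2 + β * f x ≤ a) {χ : ℝ → ℝ}
    (hχ : ContDiff ℝ 1 χ) (hχ_anti : Antitone χ) (hχ_zero : ∀ s, R ≤ s → χ s = 0)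
    (hR : IsCompact (f ⁻¹' Set.Iic R)) :
    ∫ x, χ (f x) * exp (-α * f x) * (β * f x - a) ≤ 0 := by
  set Φ : ℝ → ℝ := fun s ↦ χ s * exp (-α * s) with hΦ_def
  have hΦ : ContDiff ℝ 1 Φ := hχ.mul (contDiff_const.mul contDiff_id).exp
  have hχ_nonneg (s : ℝ) : 0 ≤ χ s :=
    (hχ_zero _ (le_max_right s R)).symm.le.trans (hχ_anti (le_max_left s R))
  have hderiv (s : ℝ) : deriv Φ s = deriv χ s * exp (-α * s) - α * Φ s := by
    have hexp : HasDerivAt (fun s ↦ exp (-α * s)) (exp (-α * s) * -α) s := by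
      simpa using ((hasDerivAt_id s).const_mul (-α)).exp
    have hΦ' : HasDerivAt Φ _ s := (hχ.differentiable one_ne_zero s).hasDerivAt.fun_mul hexp
    rw [hΦ'.deriv]
    ring
  have hvanish : ∀ x ∉ f ⁻¹' Set.Iic R, Φ (f x) = 0 ∧ deriv Φ (f x) = 0 := by
    intro x hx
    have hΦ_eq : Φ =ᶠ[nhds (f x)] fun _ ↦ 0 := by
      filter_upwards [Ioi_mem_nhds (not_le.mp hx)] with s hs
      simp [hΦ_def, hχ_zero s hs.le]
    exact ⟨hΦ_eq.eq_of_nhds, by rw [hΦ_eq.deriv_eq, deriv_const]⟩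
  have hΦc : HasCompactSupport (fun x ↦ Φ (f x)) :=
    HasCompactSupport.intro hR fun x hx ↦ (hvanish x hx).1
  have hΦ'c : HasCompactSupport (fun x ↦ deriv Φ (f x)) :=
    HasCompactSupport.intro hR fun x hx ↦ (hvanish x hx).2
  have hgrad : Continuous fun x ↦ ‖∇ f x‖ ^ 2 := by
    simp only [norm_gradient]
    exact ((hf.continuous_fderiv (by norm_num)).norm).pow 2
  have hint_lap : Integrable fun x ↦ Φ (f x) * lap f x :=
    ((hΦ.continuous.comp hf.continuous).mul
      (continuous_lap hf)).integrable_of_hasCompactSupport hΦc.mul_right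
  have hint_grad : Integrable fun x ↦ deriv Φ (f x) * ‖∇ f x‖ ^ 2 :=
    (((hΦ.continuous_deriv le_rfl).comp hf.continuous).mul
      hgrad).integrable_of_hasCompactSupport hΦ'c.mul_right
  have hint : Integrable fun x ↦ Φ (f x) * (β * f x - a) :=
    ((hΦ.continuous.comp hf.continuous).mul (by fun_prop)).integrable_of_hasCompactSupport
      hΦc.mul_right
  have hpointwise (x) :
      Φ (f x) * (β * f x - a) ≤ -(Φ (f x) * lap f x + deriv Φ (f x) * ‖∇ f x‖ ^ 2) := by
    have hΦ_nonneg : 0 ≤ Φ (f x) := mul_nonneg (hχ_nonneg _) (exp_pos _).le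
    have hχ' : deriv χ (f x) * exp (-α * f x) * ‖∇ f x‖ ^ 2 ≤ 0 :=
      mul_nonpos_of_nonpos_of_nonneg
        (mul_nonpos_of_nonpos_of_nonneg hχ_anti.deriv_nonpos (exp_pos _).le) (sq_nonneg _)
    rw [hderiv]
    nlinarith [mul_le_mul_of_nonneg_left (h1 x) hΦ_nonneg]
  calc ∫ x, Φ (f x) * (β * f x - a)
      ≤ ∫ x, -(Φ (f x) * lap f x + deriv Φ (f x) * ‖∇ f x‖ ^ 2) :=
        integral_mono hint (hint_lap.add hint_grad).neg hpointwise
    _ = 0 := by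
        rw [integral_neg, integral_add hint_lap hint_grad, integral_comp_mul_lap hΦ hf hΦc,
          neg_add_cancel, neg_zero]

end Euclidean

noncomputable def smoothCutoff (r s : ℝ) : ℝ := smoothTransition (r + 1 - s)

theorem contDiff_smoothCutoff (r : ℝ) {n : ℕ∞} : ContDiff ℝ n (smoothCutoff r) :=
  smoothTransition.contDiff.comp (contDiff_const.sub contDiff_id)

theorem antitone_smoothCutoff (r : ℝ) : Antitone (smoothCutoff r) :=
  fun _ _ h ↦ smoothTransition.monotone (by linarith)

theorem monotone_smoothCutoff_left (s : ℝ) : Monotone fun r ↦ smoothCutoff r s :=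
  fun _ _ h ↦ smoothTransition.monotone (by linarith)

theorem smoothCutoff_nonneg (r s : ℝ) : 0 ≤ smoothCutoff r s := smoothTransition.nonneg _

theorem smoothCutoff_le_one (r s : ℝ) : smoothCutoff r s ≤ 1 := smoothTransition.le_one _

theorem smoothCutoff_of_le {r s : ℝ} (h : s ≤ r) : smoothCutoff r s = 1 :=
  smoothTransition.one_of_one_le (by linarith)

theorem smoothCutoff_of_ge {r s : ℝ} (h : r + 1 ≤ s) : smoothCutoff r s = 0 :=
  smoothTransition.zero_of_nonpos (by linarith)

section SublevelCompact

variable {X : Type*} [TopologicalSpace X] [MeasurableSpace X] [OpensMeasurableSpace X]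
  {μ : Measure X} [IsFiniteMeasureOnCompacts μ] {f : X → ℝ}

theorem integrable_smoothCutoff_comp_mul (hf : Continuous f) {r : ℝ}
    (hr : IsCompact (f ⁻¹' Set.Iic (r + 1))) {g : X → ℝ} (hg : Continuous g) :
    Integrable (fun x ↦ smoothCutoff r (f x) * g x) μ :=
  (((contDiff_smoothCutoff r (n := 0)).continuous.comp hf).mul
    hg).integrable_of_hasCompactSupport
    (HasCompactSupport.intro' hr (isClosed_Iic.preimage hf) fun x hx ↦ by
      simp [smoothCutoff_of_ge (not_le.mp hx).le]).mul_right

theorem integral_smoothCutoff_mul_exp_le (hf : Continuous f) (hf0 : ∀ x, 0 ≤ f x)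
    (hsub : ∀ R, IsCompact (f ⁻¹' Set.Iic R)) {α β a : ℝ} (hα : 0 ≤ α) (hβ : 0 < β) (r : ℝ)
    (hneg : ∫ x, smoothCutoff r (f x) * exp (-α * f x) * (β * f x - a) ∂μ ≤ 0) :
    ∫ x, smoothCutoff r (f x) * exp (-α * f x) ∂μ ≤
      (1 + |a|) * μ.real (f ⁻¹' Set.Iic ((a + 1) / β)) := by
  set K := f ⁻¹' Set.Iic ((a + 1) / β)
  have hint := integrable_smoothCutoff_comp_mul (μ := μ) hf (hsub (r + 1))
    (g := fun x ↦ exp (-α * f x)) (by fun_prop)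
  have hint' : Integrable
      (fun x ↦ smoothCutoff r (f x) * exp (-α * f x) * (β * f x - a)) μ := by
    simpa only [mul_assoc] using integrable_smoothCutoff_comp_mul (μ := μ) hf (hsub (r + 1))
      (g := fun x ↦ exp (-α * f x) * (β * f x - a)) (by fun_prop)
  have hK : Integrable (K.indicator fun _ ↦ 1 + |a|) μ :=
    (integrable_indicator_iff (hf.measurable measurableSet_Iic)).2
      (integrableOn_const (hsub _).measure_lt_top.ne)
  have hpointwise (x : X) : smoothCutoff r (f x) * exp (-α * f x) ≤
      smoothCutoff r (f x) * exp (-α * f x) * (β * f x - a) +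
        K.indicator (fun _ ↦ 1 + |a|) x := by
    set u := smoothCutoff r (f x) * exp (-α * f x)
    have hu0 : 0 ≤ u := mul_nonneg (smoothCutoff_nonneg _ _) (exp_pos _).le
    have hu1 : u ≤ 1 := mul_le_one₀ (smoothCutoff_le_one _ _) (exp_pos _).le
      (exp_le_one_iff.2 (by nlinarith [hf0 x]))
    by_cases hx : x ∈ K
    · rw [Set.indicator_of_mem hx]
      nlinarith [mul_nonneg hu0 (mul_nonneg hβ.le (hf0 x)), le_abs_self a, neg_abs_le a]
    · rw [Set.indicator_of_notMem hx, add_zero]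
      have : 1 ≤ β * f x - a := by
        have := (div_lt_iff₀ hβ).1 (not_le.mp hx)
        linarith
      nlinarith
  calc ∫ x, smoothCutoff r (f x) * exp (-α * f x) ∂μ
      ≤ ∫ x, smoothCutoff r (f x) * exp (-α * f x) * (β * f x - a) +
          K.indicator (fun _ ↦ 1 + |a|) x ∂μ := integral_mono hint (hint'.add hK) hpointwise
    _ ≤ (1 + |a|) * μ.real K := by
        rw [integral_add hint' hK, integral_indicator_const _ (hf.measurable measurableSet_Iic),
          smul_eq_mul, mul_comm]
        linarith

theorem lintegral_exp_neg_le (hf : Continuous f) (hf0 : ∀ x, 0 ≤ f x)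
    (hsub : ∀ R, IsCompact (f ⁻¹' Set.Iic R)) {α β a : ℝ} (hα : 0 ≤ α) (hβ : 0 < β)
    (hneg : ∀ n : ℕ,
      ∫ x, smoothCutoff n (f x) * exp (-α * f x) * (β * f x - a) ∂μ ≤ 0) :
    ∫⁻ x, ENNReal.ofReal (exp (-α * f x)) ∂μ ≤
      ENNReal.ofReal ((1 + |a|) * μ.real (f ⁻¹' Set.Iic ((a + 1) / β))) := by
  set F : ℕ → X → ENNReal :=
    fun n x ↦ ENNReal.ofReal (smoothCutoff n (f x) * exp (-α * f x))
  have hexp : Continuous fun x ↦ exp (-α * f x) := by fun_prop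
  have hF_meas (n : ℕ) : Measurable (F n) :=
    ((contDiff_smoothCutoff n (n := 0)).continuous.comp hf |>.mul hexp).measurable.ennreal_ofReal
  have hF_mono : Monotone F := fun m n hmn x ↦ ENNReal.ofReal_le_ofReal <|
    mul_le_mul_of_nonneg_right (monotone_smoothCutoff_left _ (Nat.cast_le.2 hmn)) (exp_pos _).le
  have hF_sup (x : X) : ⨆ n, F n x = ENNReal.ofReal (exp (-α * f x)) :=
    le_antisymm (iSup_le fun n ↦ ENNReal.ofReal_le_ofReal <|
        mul_le_of_le_one_left (exp_pos _).le (smoothCutoff_le_one _ _))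
      (le_iSup_of_le ⌈f x⌉₊ (by simp [F, smoothCutoff_of_le (Nat.le_ceil _)]))
  calc ∫⁻ x, ENNReal.ofReal (exp (-α * f x)) ∂μ
      = ∫⁻ x, ⨆ n, F n x ∂μ := by simp_rw [hF_sup]
    _ = ⨆ n, ∫⁻ x, F n x ∂μ := lintegral_iSup hF_meas hF_mono
    _ ≤ _ := iSup_le fun n ↦ by
        rw [← ofReal_integral_eq_lintegral_ofReal
          (integrable_smoothCutoff_comp_mul hf (hsub _) hexp)
          (.of_forall fun x ↦ mul_nonneg (smoothCutoff_nonneg _ _) (exp_pos _).le)]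
        exact ENNReal.ofReal_le_ofReal
          (integral_smoothCutoff_mul_exp_le hf hf0 hsub hα hβ n (hneg n))

end SublevelCompact

theorem integral_exp_neg_lt_top_general {d : ℕ} (f : EuclideanSpace ℝ (Fin d) → ℝ)
    (hf : ContDiff ℝ 2 f) (hf0 : ∀ x, 0 ≤ f x)
    (hproper : ∀ K : Set ℝ, IsCompact K → IsCompact (f ⁻¹' K))
    (α β a : ℝ) (hα : 0 < α) (hβ : 0 < β)
    (h1 : ∀ x, lap f x - α * ‖∇ f x‖ ^ 2 + β * f x ≤ a) :
    (∫⁻ x : EuclideanSpace ℝ (Fin d), ENNReal.ofReal (Real.exp (-α * f x))) < ⊤ := by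
  have hsub (R : ℝ) : IsCompact (f ⁻¹' Set.Iic R) := by
    convert hproper (Set.Icc 0 R) isCompact_Icc using 1
    ext x
    simp [hf0 x]
  refine (lintegral_exp_neg_le (a := a) hf.continuous hf0 hsub hα.le hβ fun n ↦ ?_).trans_lt
    ENNReal.ofReal_lt_top
  exact integral_comp_mul_exp_mul_sub_nonpos hf h1 (contDiff_smoothCutoff n)
    (antitone_smoothCutoff n) (fun _ ↦ smoothCutoff_of_ge) (hsub _)

theorem integral_exp_neg_lt_top {d : ℕ} (f : EuclideanSpace ℝ (Fin d) → ℝ)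
    (hf : ContDiff ℝ 2 f) (hf0 : ∀ x, 0 ≤ f x)
    (hproper : ∀ K : Set ℝ, IsCompact K → IsCompact (f ⁻¹' K))
    (α β a : ℝ) (hα : 0 < α) (hβ : 0 < β)
    (h1 : ∀ x, lap f x - α * ‖∇ f x‖ ^ 2 + β * f x ≤ a)
    (h2 : ∀ x, lap f x ≤ a) :
    (∫⁻ x : EuclideanSpace ℝ (Fin d), ENNReal.ofReal (Real.exp (-α * f x))) < ⊤ :=
  integral_exp_neg_lt_top_general f hf hf0 hproper α β a hα hβ h1
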